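/- Let Ω be a bounded open subset of ℝⁿ and α ∈ (0,1]. Let K ⊆ C^{0,α}(cl Ω). Then the following conditions are equivalent: (i) K is relatively compact in C^{0,α}(cl Ω) with respect to the norm ‖·‖_{0,α}, i.e. every sequence in K admits a subsequence (k_j) and a function k ∈ C^{0,α}(cl Ω) with ‖k_j − k‖_{0,α} → 0; (ii) for every x ∈ Ω the set {k(x) : k ∈ K} is relatively compact in ℝ, and for every ε > 0 there exists a finite covering F₁, …, F_t of (Ω×Ω)∖Δ by subsets open in the subspace topology of (Ω×Ω)∖Δ such that diam(S[k](F_j)) < ε for every j ∈ {1, …, t} and every k ∈ K. -/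

import Mathlib

/-- The set of Hölder quotients of `g` on `cl Ω`, with exponent `α`. -/
def holderSet {n : ℕ} (Ω : Set (EuclideanSpace ℝ (Fin n))) (α : ℝ)
    (g : EuclideanSpace ℝ (Fin n) → ℝ) : Set ℝ :=
  {r | ∃ x ∈ closure Ω, ∃ y ∈ closure Ω, x ≠ y ∧ r = |g x - g y| / ‖x - y‖ ^ α}

/-- The norm `‖g‖_{0,α} = sup_{cl Ω} |g| + |g|_α` of `C^{0,α}(cl Ω)`. -/
noncomputable def norm0α {n : ℕ} (Ω : Set (EuclideanSpace ℝ (Fin n))) (α : ℝ)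
    (g : EuclideanSpace ℝ (Fin n) → ℝ) : ℝ :=
  sSup {r | ∃ x ∈ closure Ω, r = |g x|} + sSup (holderSet Ω α g)

/-- `S[g](x,y) = (g x - g y)·‖x - y‖^(-α)`. -/
noncomputable def Sfun {n : ℕ} (α : ℝ) (g : EuclideanSpace ℝ (Fin n) → ℝ) :
    EuclideanSpace ℝ (Fin n) × EuclideanSpace ℝ (Fin n) → ℝ :=
  fun p => (g p.1 - g p.2) * ‖p.1 - p.2‖ ^ (-α)

/-! (i) ⇒ (ii): sequential compactness yields finite `δ`-nets of `K` for `‖·‖_{0,α}`. A `1`-net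
bounds `K` pointwise. Since `|S[k] - S[v]| ≤ ‖k - v‖_{0,α}`, an `ε/8`-net `T` reduces the covering
to the finitely many maps `S[v]`, `v ∈ T`, which are continuous and bounded on `(Ω×Ω)∖Δ`: pull
back a finite cover of the bounded set `{(S[v] p)_{v ∈ T}}` by small balls.

(ii) ⇒ (i): on each piece of the cover for `ε = 1`, `S[k]` is bounded at one point (pointwise
boundedness of `K`) and oscillates by less than `1`, so the `S[k]`, `k ∈ K`, are uniformly
bounded: `K` has a uniform Hölder constant, hence is uniformly bounded and equicontinuous on the
compact set `cl Ω`. Arzelà–Ascoli gives a uniformly convergent subsequence, and the small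
uniform oscillation of `S[k]` on the finitely many pieces of the covers upgrades pointwise
convergence of `S[u_m]` to uniform convergence, i.e. convergence of the Hölder seminorm. -/

open Filter Metric Set Topology

section

variable {X : Type*} {E : Type*} [SeminormedAddCommGroup E] {α C M : ℝ}

theorem abs_sub_le_mul_rpow_of_mem_closure {s : Set E} {g : E → ℝ} (hα : 0 ≤ α)
    (hg : ContinuousOn g (closure s))
    (h : ∀ x ∈ s, ∀ y ∈ s, |g x - g y| ≤ C * ‖x - y‖ ^ α) {x y : E}
    (hx : x ∈ closure s) (hy : y ∈ closure s) : |g x - g y| ≤ C * ‖x - y‖ ^ α := by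
  have hpow : ∀ z : E, Continuous fun w : E => ‖w - z‖ ^ α := fun z =>
    (continuous_id.sub continuous_const).norm.rpow_const fun _ => Or.inr hα
  have hpow' : ∀ z : E, Continuous fun w : E => ‖z - w‖ ^ α := fun z =>
    (continuous_const.sub continuous_id).norm.rpow_const fun _ => Or.inr hα
  have inner : ∀ x ∈ s, |g x - g y| ≤ C * ‖x - y‖ ^ α := fun x hx =>
    le_on_closure (h x hx) (continuousOn_const.sub hg).abs
      (continuous_const.mul (hpow' x)).continuousOn hy
  exact le_on_closure inner (hg.sub continuousOn_const).abs
    (continuous_const.mul (hpow y)).continuousOn hx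

theorem equicontinuousOn_of_abs_sub_le_mul_rpow {ι : Type*} {s : Set E} {u : ι → E → ℝ}
    (hα : 0 < α) (h : ∀ i, ∀ x ∈ s, ∀ y ∈ s, |u i x - u i y| ≤ M * ‖x - y‖ ^ α) :
    EquicontinuousOn u s := by
  have hmod : Tendsto (fun r : ℝ => M * r ^ α) (𝓝 0) (𝓝 0) :=
    (continuous_const.mul (Real.continuous_rpow_const hα.le)).tendsto' _ _
      (by simp [Real.zero_rpow hα.ne'])
  refine (equicontinuous_restrict_iff u).1 <|
    Metric.equicontinuous_of_continuity_modulus _ hmod _ fun x y i => ?_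
  simpa [Real.dist_eq, Subtype.dist_eq, dist_eq_norm] using h i x x.2 y y.2

theorem exists_subseq_tendstoUniformlyOn [PseudoMetricSpace X] {s : Set X} (hs : IsCompact s)
    {u : ℕ → X → ℝ} (hu : ∀ m, ContinuousOn (u m) s) (hb : ∀ m, ∀ x ∈ s, |u m x| ≤ C)
    (he : EquicontinuousOn u s) :
    ∃ φ : ℕ → ℕ, StrictMono φ ∧ ∃ k : X → ℝ,
      ContinuousOn k s ∧ TendstoUniformlyOn (fun m => u (φ m)) k atTop s := by
  classical
  have := isCompact_iff_compactSpace.1 hs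
  let G : ℕ → BoundedContinuousFunction s ℝ := fun m =>
    BoundedContinuousFunction.mkOfCompact ⟨s.domRestrict (u m), (hu m).domRestrict⟩
  have hG : Equicontinuous fun m => ⇑(G m) := (equicontinuous_restrict_iff u).2 he
  have hA : IsCompact (closure (range G)) :=
    BoundedContinuousFunction.arzela_ascoli (Icc (-C) C) isCompact_Icc _
      (by rintro _ x ⟨m, rfl⟩; exact abs_le.1 (hb m x x.2))
      fun x₀ U hU => (hG x₀ U hU).mono fun x hx ⟨_, m, hm⟩ => hm ▸ hx m
  obtain ⟨f, -, φ, hφ, hlim⟩ := hA.tendsto_subseq fun m => subset_closure (mem_range_self m)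
  have hunif : TendstoUniformlyOn (fun m => u (φ m))
      (fun x => if hx : x ∈ s then f ⟨x, hx⟩ else 0) atTop s := by
    have hf : (fun x => if hx : x ∈ s then f ⟨x, hx⟩ else 0) ∘ (↑) = ⇑f :=
      funext fun x => dif_pos x.2
    rw [tendstoUniformlyOn_iff_tendstoUniformly_comp_coe, hf]
    exact BoundedContinuousFunction.tendsto_iff_tendstoUniformly.1 hlim
  exact ⟨φ, hφ, _, hunif.continuousOn (Frequently.of_forall fun m => hu (φ m)), hunif⟩

theorem exists_abs_le_of_abs_sub_le_mul_rpow {K : Set (E → ℝ)} {s : Set E}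
    (hs : Bornology.IsBounded s) (hα : 0 ≤ α) (hM : 0 ≤ M)
    (hpt : ∀ x ∈ s, ∃ B, ∀ k ∈ K, |k x| ≤ B)
    (hhol : ∀ k ∈ K, ∀ x ∈ closure s, ∀ y ∈ closure s, |k x - k y| ≤ M * ‖x - y‖ ^ α) :
    ∃ C, ∀ k ∈ K, ∀ x ∈ closure s, |k x| ≤ C := by
  rcases s.eq_empty_or_nonempty with rfl | ⟨x₀, hx₀⟩
  · exact ⟨0, by simp⟩
  obtain ⟨B, hB⟩ := hpt x₀ hx₀
  obtain ⟨r, hr⟩ := hs.closure.subset_closedBall x₀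
  refine ⟨M * r ^ α + B, fun k hk x hx => ?_⟩
  have hxr : ‖x - x₀‖ ≤ r := by simpa [dist_eq_norm] using hr hx
  have hkx := hhol k hk x hx x₀ (subset_closure hx₀)
  have : M * ‖x - x₀‖ ^ α ≤ M * r ^ α := by gcongr
  linarith [abs_sub_abs_le_abs_sub (k x) (k x₀), hB k hk]

theorem exists_bound_of_abs_sub_le_on_cover {ι κ : Type*} [Finite ι] {f : κ → X → ℝ}
    {F : ι → Set X} {c : ℝ} (hosc : ∀ k j, ∀ p ∈ F j, ∀ q ∈ F j, |f k p - f k q| ≤ c)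
    (hpt : ∀ j, ∀ p ∈ F j, ∃ B, ∀ k, |f k p| ≤ B) :
    ∃ M, 0 ≤ M ∧ ∀ k j, ∀ p ∈ F j, |f k p| ≤ M := by
  have hpiece : ∀ j, ∃ M, ∀ k, ∀ p ∈ F j, |f k p| ≤ M := by
    intro j
    rcases (F j).eq_empty_or_nonempty with hj | ⟨q, hq⟩
    · exact ⟨0, by simp [hj]⟩
    obtain ⟨B, hB⟩ := hpt j q hq
    exact ⟨c + B, fun k p hp => by
      linarith [abs_sub_abs_le_abs_sub (f k p) (f k q), hosc k j p hp q hq, hB k]⟩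
  choose M hM using hpiece
  obtain ⟨M', hM'⟩ := (finite_range M).bddAbove
  exact ⟨max M' 0, le_max_right _ _, fun k j p hp =>
    ((hM j k p hp).trans (hM' (mem_range_self j))).trans (le_max_left _ _)⟩

theorem eventually_abs_sub_le_of_abs_sub_le_on_cover {ι γ : Type*} [Finite ι] {l : Filter γ}
    [l.NeBot] {f : γ → X → ℝ} {g : X → ℝ} {F : ι → Set X} {c : ℝ} (hc : 0 < c)
    (hosc : ∀ m j, ∀ p ∈ F j, ∀ q ∈ F j, |f m p - f m q| ≤ c)
    (hlim : ∀ j, ∀ p ∈ F j, Tendsto (fun m => f m p) l (𝓝 (g p))) :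
    ∀ᶠ m in l, ∀ j, ∀ p ∈ F j, |f m p - g p| ≤ 3 * c := by
  refine eventually_all.2 fun j => ?_
  rcases (F j).eq_empty_or_nonempty with hj | ⟨q, hq⟩
  · exact Eventually.of_forall fun m => by simp [hj]
  have hg : ∀ p ∈ F j, |g q - g p| ≤ c := fun p hp =>
    le_of_tendsto' ((hlim j q hq).sub (hlim j p hp)).abs fun m => hosc m j q hq p hp
  filter_upwards [Metric.tendsto_nhds.1 (hlim j q hq) c hc] with m hm p hp
  rw [Real.dist_eq] at hm
  linarith [abs_sub_le (f m p) (f m q) (g p), abs_sub_le (f m q) (g q) (g p),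
    hosc m j p hp q hq, hg p hp]

theorem exists_fin_cover_dist_lt [TopologicalSpace X] {Y : Type*} [PseudoMetricSpace Y]
    [ProperSpace Y] {Φ : X → Y} {D : Set X} (hD : IsOpen D) (hΦ : ContinuousOn Φ D)
    (hb : Bornology.IsBounded (Φ '' D)) {r : ℝ} (hr : 0 < r) :
    ∃ (t : ℕ) (F : Fin t → Set X), (∀ j, IsOpen (F j) ∧ F j ⊆ D) ∧ D ⊆ ⋃ j, F j ∧
      ∀ j, ∀ p ∈ F j, ∀ q ∈ F j, dist (Φ p) (Φ q) < r := by
  obtain ⟨N, -, hN, hcov⟩ :=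
    exists_finite_cover_balls_of_isCompact_closure hb.isCompact_closure (half_pos hr)
  obtain ⟨t, c, -, rfl⟩ := hN.fin_param
  refine ⟨t, fun j => D ∩ Φ ⁻¹' ball (c j) (r / 2),
    fun j => ⟨hΦ.isOpen_inter_preimage hD isOpen_ball, inter_subset_left⟩,
    fun p hp => ?_, fun j p hp q hq => ?_⟩
  · obtain ⟨_, ⟨j, rfl⟩, hj⟩ := mem_iUnion₂.1 (hcov (mem_image_of_mem Φ hp))
    exact mem_iUnion.2 ⟨j, hp, hj⟩
  · linarith [dist_triangle_right (Φ p) (Φ q) (c j), mem_ball.1 hp.2, mem_ball.1 hq.2]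

end

section HolderSpace

variable {n : ℕ} {Ω : Set (EuclideanSpace ℝ (Fin n))} {α C : ℝ}
  {f g k : EuclideanSpace ℝ (Fin n) → ℝ} {K : Set (EuclideanSpace ℝ (Fin n) → ℝ)}

def MemHolderSpace (Ω : Set (EuclideanSpace ℝ (Fin n))) (α : ℝ)
    (g : EuclideanSpace ℝ (Fin n) → ℝ) : Prop :=
  ContinuousOn g (closure Ω) ∧ BddAbove (holderSet Ω α g)

theorem sSup_holderSet_nonneg (g : EuclideanSpace ℝ (Fin n) → ℝ) :
    0 ≤ sSup (holderSet Ω α g) :=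
  Real.sSup_nonneg <| by rintro _ ⟨x, -, y, -, -, rfl⟩; positivity

theorem abs_sub_le_sSup_holderSet_mul (hα : 0 < α) (hg : BddAbove (holderSet Ω α g))
    {x y : EuclideanSpace ℝ (Fin n)} (hx : x ∈ closure Ω) (hy : y ∈ closure Ω) :
    |g x - g y| ≤ sSup (holderSet Ω α g) * ‖x - y‖ ^ α := by
  rcases eq_or_ne x y with rfl | hxy
  · simp [Real.zero_rpow hα.ne']
  rw [← div_le_iff₀ (Real.rpow_pos_of_pos (norm_pos_iff.2 (sub_ne_zero.2 hxy)) α)]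
  exact le_csSup hg ⟨x, hx, y, hy, hxy, rfl⟩

theorem mem_upperBounds_holderSet
    (h : ∀ x ∈ closure Ω, ∀ y ∈ closure Ω, |g x - g y| ≤ C * ‖x - y‖ ^ α) :
    C ∈ upperBounds (holderSet Ω α g) := by
  rintro _ ⟨x, hx, y, hy, hxy, rfl⟩
  exact (div_le_iff₀ (Real.rpow_pos_of_pos (norm_pos_iff.2 (sub_ne_zero.2 hxy)) α)).2
    (h x hx y hy)

theorem MemHolderSpace.sub (hα : 0 < α) (hf : MemHolderSpace Ω α f)
    (hg : MemHolderSpace Ω α g) : MemHolderSpace Ω α (fun x => f x - g x) := by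
  refine ⟨hf.1.sub hg.1, sSup (holderSet Ω α f) + sSup (holderSet Ω α g),
    mem_upperBounds_holderSet fun x hx y hy => ?_⟩
  have := abs_sub_le_sSup_holderSet_mul hα hf.2 hx hy
  have := abs_sub_le_sSup_holderSet_mul hα hg.2 hx hy
  calc |f x - g x - (f y - g y)| ≤ |f x - f y| + |g x - g y| := by
        rw [sub_sub_sub_comm]; exact abs_sub _ _
    _ ≤ (sSup (holderSet Ω α f) + sSup (holderSet Ω α g)) * ‖x - y‖ ^ α := by linarith

theorem bddAbove_abs_of_continuousOn (hΩb : Bornology.IsBounded Ω)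
    (hg : ContinuousOn g (closure Ω)) : BddAbove {r | ∃ x ∈ closure Ω, r = |g x|} := by
  obtain ⟨B, hB⟩ := hΩb.isCompact_closure.exists_bound_of_continuousOn hg
  exact ⟨B, by rintro _ ⟨x, hx, rfl⟩; simpa using hB x hx⟩

theorem norm0α_le {A B : ℝ} (hA : 0 ≤ A) (hB : 0 ≤ B) (habs : ∀ x ∈ closure Ω, |g x| ≤ A)
    (hhol : ∀ x ∈ closure Ω, ∀ y ∈ closure Ω, |g x - g y| ≤ B * ‖x - y‖ ^ α) :
    norm0α Ω α g ≤ A + B :=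
  add_le_add (Real.sSup_le (by rintro _ ⟨x, hx, rfl⟩; exact habs x hx) hA)
    (Real.sSup_le (mem_upperBounds_holderSet hhol) hB)

theorem sSup_abs_nonneg (g : EuclideanSpace ℝ (Fin n) → ℝ) :
    0 ≤ sSup {r | ∃ x ∈ closure Ω, r = |g x|} :=
  Real.sSup_nonneg <| by rintro _ ⟨x, -, rfl⟩; exact abs_nonneg _

theorem sSup_holderSet_le_norm0α (g : EuclideanSpace ℝ (Fin n) → ℝ) :
    sSup (holderSet Ω α g) ≤ norm0α Ω α g :=
  le_add_of_nonneg_left (sSup_abs_nonneg g)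

theorem norm0α_nonneg (g : EuclideanSpace ℝ (Fin n) → ℝ) : 0 ≤ norm0α Ω α g :=
  (sSup_holderSet_nonneg g).trans (sSup_holderSet_le_norm0α g)

theorem abs_le_norm0α (hΩb : Bornology.IsBounded Ω) (hg : ContinuousOn g (closure Ω))
    {x : EuclideanSpace ℝ (Fin n)} (hx : x ∈ closure Ω) : |g x| ≤ norm0α Ω α g :=
  (le_csSup (bddAbove_abs_of_continuousOn hΩb hg) ⟨x, hx, rfl⟩).trans
    (le_add_of_nonneg_right (sSup_holderSet_nonneg g))

theorem norm0α_sub_le (hα : 0 < α) (hΩb : Bornology.IsBounded Ω)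
    (hf : MemHolderSpace Ω α (fun x => f x - k x)) (hg : MemHolderSpace Ω α (fun x => g x - k x)) :
    norm0α Ω α (fun x => f x - g x) ≤
      norm0α Ω α (fun x => f x - k x) + norm0α Ω α (fun x => g x - k x) := by
  set Af := sSup {r | ∃ x ∈ closure Ω, r = |f x - k x|}
  set Ag := sSup {r | ∃ x ∈ closure Ω, r = |g x - k x|}
  set Hf := sSup (holderSet Ω α fun x => f x - k x)
  set Hg := sSup (holderSet Ω α fun x => g x - k x)
  calc norm0α Ω α (fun x => f x - g x) ≤ (Af + Ag) + (Hf + Hg) := by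
        refine norm0α_le (add_nonneg (sSup_abs_nonneg _) (sSup_abs_nonneg _))
          (add_nonneg (sSup_holderSet_nonneg _) (sSup_holderSet_nonneg _))
          (fun x hx => ?_) fun x hx y hy => ?_
        · have := le_csSup (bddAbove_abs_of_continuousOn hΩb hf.1) ⟨x, hx, rfl⟩
          have := le_csSup (bddAbove_abs_of_continuousOn hΩb hg.1) ⟨x, hx, rfl⟩
          linarith [abs_sub_le (f x) (k x) (g x), abs_sub_comm (k x) (g x)]
        · have := abs_sub_le_sSup_holderSet_mul hα hf.2 hx hy
          have := abs_sub_le_sSup_holderSet_mul hα hg.2 hx hy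
          have := abs_sub (f x - k x - (f y - k y)) (g x - k x - (g y - k y))
          rw [show f x - k x - (f y - k y) - (g x - k x - (g y - k y)) =
            f x - g x - (f y - g y) by ring] at this
          linarith
    _ = _ := by simp only [norm0α]; ring

theorem Sfun_sub (p : EuclideanSpace ℝ (Fin n) × EuclideanSpace ℝ (Fin n)) :
    Sfun α (fun x => f x - g x) p = Sfun α f p - Sfun α g p := by
  simp only [Sfun]; ring

theorem abs_Sfun (g : EuclideanSpace ℝ (Fin n) → ℝ)
    (p : EuclideanSpace ℝ (Fin n) × EuclideanSpace ℝ (Fin n)) :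
    |Sfun α g p| = |g p.1 - g p.2| / ‖p.1 - p.2‖ ^ α := by
  rw [Sfun, abs_mul, Real.rpow_neg (norm_nonneg _), abs_inv,
    abs_of_nonneg (Real.rpow_nonneg (norm_nonneg _) _), div_eq_mul_inv]

theorem abs_Sfun_le_sSup_holderSet (hα : 0 < α) (hg : BddAbove (holderSet Ω α g))
    {p : EuclideanSpace ℝ (Fin n) × EuclideanSpace ℝ (Fin n)}
    (h1 : p.1 ∈ closure Ω) (h2 : p.2 ∈ closure Ω) : |Sfun α g p| ≤ sSup (holderSet Ω α g) := by
  rw [abs_Sfun]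
  exact div_le_of_le_mul₀ (by positivity) (sSup_holderSet_nonneg g)
    (abs_sub_le_sSup_holderSet_mul hα hg h1 h2)

theorem abs_sub_le_of_abs_Sfun_le (hα : 0 < α) {x y : EuclideanSpace ℝ (Fin n)}
    (h : x ≠ y → |Sfun α g (x, y)| ≤ C) : |g x - g y| ≤ C * ‖x - y‖ ^ α := by
  rcases eq_or_ne x y with rfl | hxy
  · simp [Real.zero_rpow hα.ne']
  have := h hxy
  rwa [abs_Sfun, div_le_iff₀ (Real.rpow_pos_of_pos (norm_pos_iff.2 (sub_ne_zero.2 hxy)) α)]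
    at this

theorem continuousOn_Sfun {s : Set (EuclideanSpace ℝ (Fin n))} (hg : ContinuousOn g s) :
    ContinuousOn (Sfun α g) s.offDiag := by
  refine ((hg.comp continuousOn_fst fun p hp => hp.1).sub
    (hg.comp continuousOn_snd fun p hp => hp.2.1)).mul fun p hp => ?_
  exact ((continuous_fst.sub continuous_snd).norm.continuousAt.rpow_const
    (Or.inl (norm_ne_zero_iff.2 (sub_ne_zero.2 hp.2.2)))).continuousWithinAt

theorem abs_Sfun_sub_le_of_diam_lt (hα : 0 < α) (hg : BddAbove (holderSet Ω α g))
    {F : Set (EuclideanSpace ℝ (Fin n) × EuclideanSpace ℝ (Fin n))} (hF : F ⊆ Ω.offDiag)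
    {ε : ℝ} (h : diam (Sfun α g '' F) < ε)
    {p q : EuclideanSpace ℝ (Fin n) × EuclideanSpace ℝ (Fin n)}
    (hp : p ∈ F) (hq : q ∈ F) : |Sfun α g p - Sfun α g q| ≤ ε := by
  -- `diam` is `0` on unbounded sets, so the boundedness of `S[g]` is what makes `h` informative.
  have hb : Bornology.IsBounded (Sfun α g '' F) := by
    refine isBounded_iff_forall_norm_le.2 ⟨sSup (holderSet Ω α g), ?_⟩
    rintro _ ⟨r, hr, rfl⟩
    exact abs_Sfun_le_sSup_holderSet hα hg (subset_closure (hF hr).1) (subset_closure (hF hr).2.1)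
  rw [← Real.dist_eq]
  exact (dist_le_diam_of_mem hb (mem_image_of_mem _ hp) (mem_image_of_mem _ hq)).trans h.le

theorem exists_finset_norm0α_sub_lt (hα : 0 < α) (hΩb : Bornology.IsBounded Ω)
    (hK : ∀ k ∈ K, MemHolderSpace Ω α k)
    (hseq : ∀ u : ℕ → EuclideanSpace ℝ (Fin n) → ℝ, (∀ j, u j ∈ K) →
      ∃ φ : ℕ → ℕ, StrictMono φ ∧ ∃ k, MemHolderSpace Ω α k ∧
        Tendsto (fun j => norm0α Ω α (fun x => u (φ j) x - k x)) atTop (𝓝 0))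
    {δ : ℝ} (hδ : 0 < δ) :
    ∃ T : Finset (EuclideanSpace ℝ (Fin n) → ℝ), ↑T ⊆ K ∧
      ∀ k ∈ K, ∃ v ∈ T, norm0α Ω α (fun x => k x - v x) < δ := by
  by_contra! hsep
  obtain ⟨u, huK, hu⟩ := exists_seq_of_forall_finset_exists (· ∈ K)
    (fun v k => δ ≤ norm0α Ω α (fun x => k x - v x)) fun T hT => hsep T hT
  obtain ⟨φ, hφ, k, hk, hlim⟩ := hseq u huK
  obtain ⟨N, hN⟩ := eventually_atTop.1 ((tendsto_order.1 hlim).2 (δ / 2) (half_pos hδ))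
  have := norm0α_sub_le hα hΩb ((hK _ (huK (φ (N + 1)))).sub hα hk) ((hK _ (huK (φ N))).sub hα hk)
  linarith [hu _ _ (hφ N.lt_succ_self), hN N le_rfl, hN (N + 1) N.le_succ]

theorem isCompact_closure_eval (hΩb : Bornology.IsBounded Ω)
    (hK : ∀ k ∈ K, ContinuousOn k (closure Ω)) {T : Finset (EuclideanSpace ℝ (Fin n) → ℝ)}
    (hTK : ↑T ⊆ K) (hT : ∀ k ∈ K, ∃ v ∈ T, norm0α Ω α (fun x => k x - v x) < 1)
    {x : EuclideanSpace ℝ (Fin n)} (hx : x ∈ closure Ω) :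
    IsCompact (closure {y : ℝ | ∃ k ∈ K, k x = y}) := by
  refine Bornology.IsBounded.isCompact_closure
    (isBounded_iff_forall_norm_le.2 ⟨∑ v ∈ T, |v x| + 1, ?_⟩)
  rintro _ ⟨k, hk, rfl⟩
  obtain ⟨v, hv, hkv⟩ := hT k hk
  have := abs_le_norm0α (α := α) (g := fun y => k y - v y) hΩb ((hK k hk).sub (hK v (hTK hv))) hx
  have := Finset.single_le_sum (f := fun v => |v x|) (fun _ _ => abs_nonneg _) hv
  rw [Real.norm_eq_abs]
  linarith [abs_sub_abs_le_abs_sub (k x) (v x)]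

theorem exists_cover_diam_Sfun_lt (hα : 0 < α) (hΩo : IsOpen Ω)
    (hK : ∀ k ∈ K, MemHolderSpace Ω α k) {T : Finset (EuclideanSpace ℝ (Fin n) → ℝ)}
    (hTK : ↑T ⊆ K) {ε : ℝ} (hε : 0 < ε)
    (hT : ∀ k ∈ K, ∃ v ∈ T, norm0α Ω α (fun x => k x - v x) < ε / 8) :
    ∃ (t : ℕ) (F : Fin t → Set (EuclideanSpace ℝ (Fin n) × EuclideanSpace ℝ (Fin n))),
      (∀ j, ∃ U, IsOpen U ∧ F j = U ∩ Ω.offDiag) ∧ Ω.offDiag ⊆ ⋃ j, F j ∧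
        ∀ j, ∀ k ∈ K, diam (Sfun α k '' F j) < ε := by
  let Φ : EuclideanSpace ℝ (Fin n) × EuclideanSpace ℝ (Fin n) → T → ℝ := fun p v => Sfun α v p
  have hΦ : ContinuousOn Φ Ω.offDiag :=
    continuousOn_pi.2 fun v => continuousOn_Sfun ((hK v (hTK v.2)).1.mono subset_closure)
  have hb : Bornology.IsBounded (Φ '' Ω.offDiag) := by
    have hsum := Finset.sum_nonneg fun v (_ : v ∈ T) => sSup_holderSet_nonneg (Ω := Ω) (α := α) v
    refine isBounded_iff_forall_norm_le.2 ⟨∑ v ∈ T, sSup (holderSet Ω α v), ?_⟩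
    rintro _ ⟨p, hp, rfl⟩
    refine (pi_norm_le_iff_of_nonneg hsum).2 fun v => ?_
    exact (abs_Sfun_le_sSup_holderSet hα (hK v (hTK v.2)).2 (subset_closure hp.1)
      (subset_closure hp.2.1)).trans
        (Finset.single_le_sum (fun v _ => sSup_holderSet_nonneg v) v.2)
  have hD : IsOpen Ω.offDiag :=
    prod_sdiff_diagonal Ω ▸ (hΩo.prod hΩo).sdiff isClosed_diagonal
  obtain ⟨t, F, hFo, hcover, hF⟩ := exists_fin_cover_dist_lt hD hΦ hb (by positivity : 0 < ε / 4)
  refine ⟨t, F, fun j => ⟨F j, (hFo j).1, (inter_eq_left.2 (hFo j).2).symm⟩, hcover,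
    fun j k hk => ?_⟩
  obtain ⟨v, hv, hkv⟩ := hT k hk
  have hclose : ∀ p ∈ F j, |Sfun α k p - Sfun α v p| ≤ ε / 8 := fun p hp => by
    have hp' := (hFo j).2 hp
    rw [← Sfun_sub]
    exact (abs_Sfun_le_sSup_holderSet hα ((hK k hk).sub hα (hK v (hTK hv))).2
      (subset_closure hp'.1) (subset_closure hp'.2.1)).trans
        ((sSup_holderSet_le_norm0α _).trans hkv.le)
  refine (diam_le_of_forall_dist_le (by positivity) ?_).trans_lt (by linarith : ε / 2 < ε)
  rintro _ ⟨p, hp, rfl⟩ _ ⟨q, hq, rfl⟩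
  have hvpq : |Sfun α v p - Sfun α v q| ≤ ε / 4 :=
    (dist_le_pi_dist (Φ p) (Φ q) ⟨v, hv⟩).trans (hF j p hp q hq).le
  rw [Real.dist_eq]
  linarith [abs_sub_le (Sfun α k p) (Sfun α v p) (Sfun α k q),
    abs_sub_le (Sfun α v p) (Sfun α v q) (Sfun α k q), hclose p hp, hclose q hq,
    abs_sub_comm (Sfun α v q) (Sfun α k q)]

def HasFiniteOscCover (Ω : Set (EuclideanSpace ℝ (Fin n))) (α : ℝ)
    (K : Set (EuclideanSpace ℝ (Fin n) → ℝ)) (ε : ℝ) : Prop :=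
  ∃ (t : ℕ) (F : Fin t → Set (EuclideanSpace ℝ (Fin n) × EuclideanSpace ℝ (Fin n))),
    Ω.offDiag ⊆ ⋃ j, F j ∧ ∀ j, F j ⊆ Ω.offDiag ∧
      ∀ k ∈ K, ∀ p ∈ F j, ∀ q ∈ F j, |Sfun α k p - Sfun α k q| ≤ ε

theorem hasFiniteOscCover_of_diam_lt (hα : 0 < α) (hK : ∀ k ∈ K, BddAbove (holderSet Ω α k))
    {ε : ℝ} (h : ∃ (t : ℕ)
      (F : Fin t → Set (EuclideanSpace ℝ (Fin n) × EuclideanSpace ℝ (Fin n))),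
      (∀ j, ∃ U, IsOpen U ∧ F j = U ∩ Ω.offDiag) ∧ Ω.offDiag ⊆ ⋃ j, F j ∧
        ∀ j, ∀ k ∈ K, diam (Sfun α k '' F j) < ε) :
    HasFiniteOscCover Ω α K ε := by
  obtain ⟨t, F, hFo, hcover, hF⟩ := h
  have hFD : ∀ j, F j ⊆ Ω.offDiag := fun j => by
    obtain ⟨U, -, hU⟩ := hFo j
    exact hU ▸ inter_subset_right
  exact ⟨t, F, hcover, fun j => ⟨hFD j, fun k hk p hp q hq =>
    abs_Sfun_sub_le_of_diam_lt hα (hK k hk) (hFD j) (hF j k hk) hp hq⟩⟩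

theorem exists_uniform_holder_bound (hα : 0 < α) (hK : ∀ k ∈ K, ContinuousOn k (closure Ω))
    (hpt : ∀ x ∈ Ω, ∃ B, ∀ k ∈ K, |k x| ≤ B) (hcov : HasFiniteOscCover Ω α K 1) :
    ∃ M, 0 ≤ M ∧ ∀ k ∈ K, ∀ x ∈ closure Ω, ∀ y ∈ closure Ω, |k x - k y| ≤ M * ‖x - y‖ ^ α := by
  obtain ⟨t, F, hcover, hF⟩ := hcov
  obtain ⟨M, hM0, hM⟩ := exists_bound_of_abs_sub_le_on_cover (f := fun k : K => Sfun α k)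
    (fun k j p hp q hq => (hF j).2 k k.2 p hp q hq) fun j p hp => by
      obtain ⟨h1, h2, -⟩ := (hF j).1 hp
      obtain ⟨B1, hB1⟩ := hpt _ h1
      obtain ⟨B2, hB2⟩ := hpt _ h2
      refine ⟨(B1 + B2) / ‖p.1 - p.2‖ ^ α, fun k => ?_⟩
      rw [abs_Sfun]
      gcongr
      exact (abs_sub _ _).trans (add_le_add (hB1 k k.2) (hB2 k k.2))
  refine ⟨M, hM0, fun k hk x hx y hy => abs_sub_le_mul_rpow_of_mem_closure hα.le (hK k hk)
    (fun a ha b hb => abs_sub_le_of_abs_Sfun_le hα fun hab => ?_) hx hy⟩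
  obtain ⟨j, hj⟩ := mem_iUnion.1 (hcover (show (a, b) ∈ Ω.offDiag from ⟨ha, hb, hab⟩))
  exact hM ⟨k, hk⟩ j _ hj

theorem tendsto_norm0α_sub_of_tendstoUniformlyOn (hα : 0 < α) {u : ℕ → EuclideanSpace ℝ (Fin n) → ℝ}
    (hu : ∀ m, u m ∈ K) (hcont : ∀ m, ContinuousOn (u m) (closure Ω))
    (hk : ContinuousOn k (closure Ω)) (hunif : TendstoUniformlyOn u k atTop (closure Ω))
    (hcov : ∀ ε > 0, HasFiniteOscCover Ω α K ε) :
    Tendsto (fun m => norm0α Ω α (fun x => u m x - k x)) atTop (𝓝 0) := by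
  refine tendsto_order.2 ⟨fun a ha => Eventually.of_forall fun m => ha.trans_le (norm0α_nonneg _),
    fun ε hε => ?_⟩
  obtain ⟨t, F, hcover, hF⟩ := hcov (ε / 8) (by positivity)
  have hpt := fun x (hx : x ∈ closure Ω) => hunif.tendsto_at hx
  have hS : ∀ᶠ m in atTop, ∀ j, ∀ p ∈ F j, |Sfun α (u m) p - Sfun α k p| ≤ 3 * (ε / 8) :=
    eventually_abs_sub_le_of_abs_sub_le_on_cover (by positivity)
      (fun m j p hp q hq => (hF j).2 _ (hu m) p hp q hq) fun j p hp =>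
        ((hpt _ (subset_closure ((hF j).1 hp).1)).sub
          (hpt _ (subset_closure ((hF j).1 hp).2.1))).mul_const _
  filter_upwards [hS, Metric.tendstoUniformlyOn_iff.1 hunif (ε / 8) (by positivity)]
    with m hSm hsup
  refine (norm0α_le (A := ε / 8) (B := 3 * (ε / 8)) (by positivity) (by positivity)
    (fun x hx => ?_) fun x hx y hy => abs_sub_le_mul_rpow_of_mem_closure
      (g := fun x => u m x - k x) hα.le ((hcont m).sub hk)
      (fun a ha b hb => abs_sub_le_of_abs_Sfun_le (g := fun x => u m x - k x) hα
        fun hab => ?_) hx hy).trans_lt (by linarith)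
  · rw [abs_sub_comm, ← Real.dist_eq]
    exact (hsup x hx).le
  · obtain ⟨j, hj⟩ := mem_iUnion.1 (hcover (show (a, b) ∈ Ω.offDiag from ⟨ha, hb, hab⟩))
    rw [Sfun_sub]
    exact hSm j _ hj

theorem exists_subseq_tendsto_norm0α (hα : 0 < α) (hΩb : Bornology.IsBounded Ω)
    (hK : ∀ k ∈ K, MemHolderSpace Ω α k) (hpt : ∀ x ∈ Ω, ∃ B, ∀ k ∈ K, |k x| ≤ B)
    (hcov : ∀ ε > 0, HasFiniteOscCover Ω α K ε) {u : ℕ → EuclideanSpace ℝ (Fin n) → ℝ}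
    (hu : ∀ m, u m ∈ K) :
    ∃ φ : ℕ → ℕ, StrictMono φ ∧ ∃ k, MemHolderSpace Ω α k ∧
      Tendsto (fun m => norm0α Ω α (fun x => u (φ m) x - k x)) atTop (𝓝 0) := by
  obtain ⟨M, hM0, hM⟩ :=
    exists_uniform_holder_bound hα (fun k hk => (hK k hk).1) hpt (hcov 1 one_pos)
  obtain ⟨C, hC⟩ := exists_abs_le_of_abs_sub_le_mul_rpow hΩb hα.le hM0 hpt hM
  obtain ⟨φ, hφ, k, hkc, hunif⟩ := exists_subseq_tendstoUniformlyOn hΩb.isCompact_closure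
    (fun m => (hK _ (hu m)).1) (fun m => hC _ (hu m))
    (equicontinuousOn_of_abs_sub_le_mul_rpow hα fun m => hM _ (hu m))
  have hkM : ∀ x ∈ closure Ω, ∀ y ∈ closure Ω, |k x - k y| ≤ M * ‖x - y‖ ^ α :=
    fun x hx y hy => le_of_tendsto' ((hunif.tendsto_at hx).sub (hunif.tendsto_at hy)).abs
      fun m => hM _ (hu _) x hx y hy
  exact ⟨φ, hφ, k, ⟨hkc, M, mem_upperBounds_holderSet hkM⟩,
    tendsto_norm0α_sub_of_tendstoUniformlyOn hα (fun m => hu (φ m))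
      (fun m => (hK _ (hu _)).1) hkc hunif hcov⟩

end HolderSpace

/-- **Theorem 2.4.** For `Ω ⊆ ℝⁿ` bounded open, `α ∈ (0,1]` and `K ⊆ C^{0,α}(cl Ω)`:
`K` is relatively compact in `(C^{0,α}(cl Ω), ‖·‖_{0,α})` iff `K` is pointwise relatively
compact on `Ω` and for every `ε > 0` there is a finite covering of `(Ω×Ω)∖Δ` by relatively
open subsets on each of which every `S[k]`, `k ∈ K`, has oscillation `< ε`. -/
theorem stmt_7 (n : ℕ) (Ω : Set (EuclideanSpace ℝ (Fin n)))
    (hΩo : IsOpen Ω) (hΩb : Bornology.IsBounded Ω)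
    (α : ℝ) (hα : α ∈ Set.Ioc (0 : ℝ) 1)
    (K : Set (EuclideanSpace ℝ (Fin n) → ℝ))
    (hK : ∀ k ∈ K, ContinuousOn k (closure Ω) ∧ BddAbove (holderSet Ω α k)) :
    (∀ u : ℕ → EuclideanSpace ℝ (Fin n) → ℝ, (∀ j, u j ∈ K) →
      ∃ φ : ℕ → ℕ, StrictMono φ ∧
        ∃ k : EuclideanSpace ℝ (Fin n) → ℝ,
          (ContinuousOn k (closure Ω) ∧ BddAbove (holderSet Ω α k)) ∧
          Filter.Tendsto (fun j => norm0α Ω α (fun x => u (φ j) x - k x))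
            Filter.atTop (nhds 0)) ↔
    ((∀ x ∈ Ω, IsCompact (closure {y : ℝ | ∃ k ∈ K, k x = y})) ∧
      ∀ ε : ℝ, 0 < ε →
        ∃ (t : ℕ) (F : Fin t → Set (EuclideanSpace ℝ (Fin n) × EuclideanSpace ℝ (Fin n))),
          (∀ j, ∃ U, IsOpen U ∧
            F j = U ∩ ((Ω ×ˢ Ω) \
              {p : EuclideanSpace ℝ (Fin n) × EuclideanSpace ℝ (Fin n) | p.1 = p.2})) ∧
          ((Ω ×ˢ Ω) \ {p : EuclideanSpace ℝ (Fin n) × EuclideanSpace ℝ (Fin n) | p.1 = p.2})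
            ⊆ ⋃ j, F j ∧
          ∀ j, ∀ k ∈ K, Metric.diam (Sfun α k '' F j) < ε) := by
  have hα0 := hα.1
  rw [show (Ω ×ˢ Ω) \ {p : EuclideanSpace ℝ (Fin n) × EuclideanSpace ℝ (Fin n) | p.1 = p.2} =
    Ω.offDiag from prod_sdiff_diagonal Ω]
  constructor
  · intro hseq
    have hnet := fun δ (hδ : 0 < δ) => exists_finset_norm0α_sub_lt hα0 hΩb hK hseq hδ
    obtain ⟨T, hTK, hT⟩ := hnet 1 one_pos
    refine ⟨fun x hx => isCompact_closure_eval hΩb (fun k hk => (hK k hk).1) hTK hT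
      (subset_closure hx), fun ε hε => ?_⟩
    obtain ⟨T, hTK, hT⟩ := hnet (ε / 8) (by positivity)
    exact exists_cover_diam_Sfun_lt hα0 hΩo hK hTK hε hT
  · rintro ⟨hpt, hcov⟩ u hu
    refine exists_subseq_tendsto_norm0α hα0 hΩb hK (fun x hx => ?_)
      (fun ε hε => hasFiniteOscCover_of_diam_lt hα0 (fun k hk => (hK k hk).2) (hcov ε hε)) hu
    obtain ⟨B, hB⟩ := isBounded_iff_forall_norm_le.1 ((hpt x hx).isBounded.subset subset_closure)
    exact ⟨B, fun k hk => hB _ ⟨k, hk, rfl⟩⟩
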